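/- arXiv:2409.14643 — 3 statements merged into one kernel-verified Lean document; each statement's English description precedes it below -/
import Mathlib

section
/- Every monic polynomial matrix equation X^n + A_1 X^{n−1} + ... + A_{n−1} X + A_n = 0 of degree n ≥ 1, where A_1,...,A_n are d×d circulant matrices over ℂ, has at least one solution X which is a d×d circulant matrix over ℂ. -/
/-!
The DFT matrix `Sm d` simultaneously diagonalises all circulant matrices:
`circ a * Sm d = Sm d * diagonal (Sm d *ᵥ a)`. Conjugating by it turns the matrix equation into
`d` scalar monic equations of degree `n ≥ 1`, one for each frequency, and each has a complex root.
The circulant matrix whose eigenvalues are these roots solves the matrix equation.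
-/

open Matrix

def Cyc (d : ℕ) [NeZero d] : Matrix (Fin d) (Fin d) ℂ :=
  fun i j => if j = i + 1 then 1 else 0

def circ {d : ℕ} (a : Fin d → ℂ) : Matrix (Fin d) (Fin d) ℂ :=
  fun i j => a (j - i)

def IsCirc {d : ℕ} (A : Matrix (Fin d) (Fin d) ℂ) : Prop :=
  ∃ a : Fin d → ℂ, A = circ a

noncomputable def ζ (d : ℕ) : ℂ := Complex.exp (2 * Real.pi * Complex.I / d)

noncomputable def Sm (d : ℕ) : Matrix (Fin d) (Fin d) ℂ :=
  fun i j => ζ d ^ ((i : ℕ) * (j : ℕ))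

section MonicEval

variable {R S : Type*} {n : ℕ}

def monicEval [Semiring R] (c : Fin n → R) (x : R) : R :=
  x ^ n + ∑ k : Fin n, c k * x ^ (n - 1 - (k : ℕ))

theorem map_monicEval [Semiring R] [Semiring S] (f : R →+* S) (c : Fin n → R) (x : R) :
    f (monicEval c x) = monicEval (fun k => f (c k)) (f x) := by
  simp only [monicEval, map_add, map_sum, map_mul, map_pow]

theorem SemiconjBy.monicEval [Semiring R] {s x y : R} {c c' : Fin n → R}
    (hx : SemiconjBy s x y) (hc : ∀ k, SemiconjBy s (c k) (c' k)) :
    SemiconjBy s (monicEval c x) (monicEval c' y) := by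
  refine (hx.pow_right n).add_right ?_
  simp only [SemiconjBy, Finset.mul_sum, Finset.sum_mul]
  exact Finset.sum_congr rfl fun k _ => ((hc k).mul_right (hx.pow_right _)).eq

theorem exists_monicEval_eq_zero {K : Type*} [Field K] [IsAlgClosed K] (hn : n ≠ 0)
    (c : Fin n → K) : ∃ z, monicEval c z = 0 := by
  open Polynomial in
  let q : K[X] := ∑ k : Fin n, C (c k) * X ^ (n - 1 - (k : ℕ))
  have hq : q.degree < n := by
    have hrev : q = ∑ k : Fin n, C (c (Fin.rev k)) * X ^ (k : ℕ) := by
      refine (Fintype.sum_equiv Fin.revPerm _ _ fun k => ?_)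
      simp only [Fin.revPerm_apply, Fin.rev_rev, Fin.val_rev]
      congr 2
      omega
    rw [hrev]
    exact degree_sum_fin_lt _
  have hdeg : (X ^ n + q).degree ≠ 0 := by
    rw [degree_add_eq_left_of_degree_lt (by rwa [degree_X_pow]), degree_X_pow]
    exact_mod_cast hn
  obtain ⟨z, hz⟩ := IsAlgClosed.exists_root _ hdeg
  refine ⟨z, ?_⟩
  simpa [q, monicEval, eval_finsetSum] using hz

theorem Pi.exists_monicEval_eq_zero {ι K : Type*} [Field K] [IsAlgClosed K] (hn : n ≠ 0)
    (c : Fin n → ι → K) : ∃ t, monicEval c t = 0 := by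
  choose t ht using fun j => _root_.exists_monicEval_eq_zero hn (fun k => c k j)
  exact ⟨t, funext fun j => (map_monicEval (Pi.evalRingHom (fun _ => K) j) c t).trans (ht j)⟩

theorem monicEval_diagonal {ι : Type*} [Fintype ι] [DecidableEq ι] [Semiring R]
    (c : Fin n → ι → R) (x : ι → R) :
    monicEval (fun k => diagonal (c k)) (diagonal x) = diagonal (monicEval c x) :=
  (map_monicEval (diagonalRingHom ι R) c x).symm

end MonicEval

theorem zeta_isPrimitiveRoot {d : ℕ} (hd : d ≠ 0) : IsPrimitiveRoot (ζ d) d :=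
  Complex.isPrimitiveRoot_exp d hd

theorem zeta_pow_mod (d a : ℕ) : ζ d ^ (a % d) = ζ d ^ a := by
  rcases eq_or_ne d 0 with rfl | hd
  · rw [Nat.mod_zero]
  · simpa only [← (zeta_isPrimitiveRoot hd).eq_orderOf] using pow_mod_orderOf (ζ d) a

theorem zeta_pow_fin_add_mul {d : ℕ} (i m : Fin d) (j : ℕ) :
    ζ d ^ (((i + m : Fin d) : ℕ) * j) = ζ d ^ ((i : ℕ) * j) * ζ d ^ ((m : ℕ) * j) := by
  rw [Fin.val_add, pow_mul, zeta_pow_mod, ← pow_mul, add_mul, pow_add]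

theorem semiconjBy_Sm_circ {d : ℕ} (a : Fin d → ℂ) :
    SemiconjBy (Sm d) (diagonal (Sm d *ᵥ a)) (circ a) := by
  ext i j
  have : NeZero d := NeZero.of_pos i.pos
  rw [Matrix.mul_diagonal, Matrix.mul_apply, ← Equiv.sum_comp (Equiv.addLeft i), mulVec,
    dotProduct, Finset.mul_sum]
  refine Finset.sum_congr rfl fun m _ => ?_
  simp only [Sm, circ, Equiv.coe_addLeft, add_sub_cancel_left, zeta_pow_fin_add_mul]
  ring

theorem det_Sm_ne_zero (d : ℕ) : (Sm d).det ≠ 0 := by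
  have hS : Sm d = vandermonde (fun i : Fin d => ζ d ^ (i : ℕ)) := by
    ext i j
    simp [Sm, vandermonde, pow_mul]
  rw [hS, det_vandermonde_ne_zero_iff]
  intro i j h
  exact Fin.ext ((zeta_isPrimitiveRoot i.pos.ne').pow_inj i.isLt j.isLt h)

theorem stmt10 (d n : ℕ) (hn : 1 ≤ n) (A : Fin n → Matrix (Fin d) (Fin d) ℂ)
    (hA : ∀ k, IsCirc (A k)) :
    ∃ X : Matrix (Fin d) (Fin d) ℂ, IsCirc X ∧
      X ^ n + ∑ k : Fin n, A k * X ^ (n - 1 - (k : ℕ)) = 0 := by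
  choose a ha using hA
  obtain ⟨t, ht⟩ :=
    Pi.exists_monicEval_eq_zero (Nat.one_le_iff_ne_zero.mp hn) fun k => Sm d *ᵥ a k
  have hdet : IsUnit (Sm d).det := (det_Sm_ne_zero d).isUnit
  set c := (Sm d)⁻¹ *ᵥ t
  have hc : Sm d *ᵥ c = t := by rw [mulVec_mulVec, mul_nonsing_inv _ hdet, one_mulVec]
  have hconj : SemiconjBy (Sm d) 0 (monicEval A (circ c)) := by
    have := (hc ▸ semiconjBy_Sm_circ c).monicEval fun k => ha k ▸ semiconjBy_Sm_circ (a k)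
    rwa [monicEval_diagonal, ht, diagonal_zero'] at this
  have hS : IsUnit (Sm d) := (isUnit_iff_isUnit_det _).mpr hdet
  exact ⟨circ c, ⟨c, rfl⟩, hS.mul_left_eq_zero.mp (hconj.eq.symm.trans (mul_zero _))⟩
end

section
/- The number of circulant matrix solutions X of the equation X^n + A_1 X^{n−1} + ... + A_n = 0, with A_1,...,A_n circulant d×d matrices over ℂ, is at most n^d. -/
/-!
The columns of the Fourier matrix `Sm d` are common eigenvectors of all circulant matrices, the
eigenvalue of `circ a` on column `j` being the `j`-th coordinate of `a ᵥ* Sm d`. Applied to a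
circulant solution `circ a`, the matrix equation becomes, for each `j`, a monic scalar equation of
degree `n` satisfied by `(a ᵥ* Sm d) j`. Since `Sm d` is an invertible Vandermonde matrix, `a` is
determined by these `d` eigenvalues, each of which is one of at most `n` roots.
-/

open Matrix

open Polynomial

section

variable {R ι : Type*} [CommRing R] [Fintype ι] [DecidableEq ι]

theorem Matrix.pow_mulVec_of_mulVec_eq_smul {X : Matrix ι ι R} {v : ι → R} {x : R}
    (hX : X *ᵥ v = x • v) (m : ℕ) : X ^ m *ᵥ v = x ^ m • v := by
  induction m with
  | zero => simp
  | succ m ih => rw [pow_succ, ← mulVec_mulVec, hX, mulVec_smul, ih, smul_smul, pow_succ']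

theorem Matrix.mulVec_pow_add_sum_mul_pow {n : ℕ} {X : Matrix ι ι R} {A : Fin n → Matrix ι ι R}
    {v : ι → R} {x : R} {a : Fin n → R} (hX : X *ᵥ v = x • v) (hA : ∀ k, A k *ᵥ v = a k • v) :
    (X ^ n + ∑ k : Fin n, A k * X ^ (n - 1 - (k : ℕ))) *ᵥ v =
      (x ^ n + ∑ k : Fin n, a k * x ^ (n - 1 - (k : ℕ))) • v := by
  simp only [add_mulVec, Matrix.sum_mulVec, ← mulVec_mulVec, pow_mulVec_of_mulVec_eq_smul hX,
    mulVec_smul, hA, smul_smul, mul_comm (x ^ _) (a _), add_smul, Finset.sum_smul]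

end

section

variable {R : Type*} [CommRing R]

theorem Polynomial.degree_sum_C_mul_X_pow_sub_lt {n : ℕ} (c : Fin n → R) :
    (∑ k : Fin n, C (c k) * X ^ (n - 1 - (k : ℕ))).degree < (n : WithBot ℕ) := by
  rw [← Equiv.sum_comp Fin.revPerm]
  simp only [Fin.revPerm_apply, Fin.val_rev]
  convert degree_sum_fin_lt (fun k => c k.rev) using 5 with k
  omega

theorem Polynomial.monic_X_pow_add_sum_C_mul_X_pow_sub {n : ℕ} (c : Fin n → R) :
    (X ^ n + ∑ k : Fin n, C (c k) * X ^ (n - 1 - (k : ℕ))).Monic :=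
  monic_X_pow_add (degree_sum_C_mul_X_pow_sub_lt c)

theorem Polynomial.natDegree_X_pow_add_sum_C_mul_X_pow_sub [Nontrivial R] {n : ℕ}
    (c : Fin n → R) :
    (X ^ n + ∑ k : Fin n, C (c k) * X ^ (n - 1 - (k : ℕ))).natDegree = n := by
  rw [natDegree_add_eq_left_of_degree_lt, natDegree_X_pow]
  exact (degree_sum_C_mul_X_pow_sub_lt c).trans_eq (degree_X_pow n).symm

variable [IsDomain R] {ι : Type*} [Fintype ι] {p : ι → R[X]}

theorem Polynomial.setOf_forall_isRoot_eq_piFinset [DecidableEq ι] [DecidableEq R]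
    (hp : ∀ i, p i ≠ 0) :
    {x : ι → R | ∀ i, (p i).IsRoot (x i)} = Fintype.piFinset fun i => (p i).roots.toFinset := by
  ext x
  simp [mem_roots', hp]

theorem Polynomial.finite_setOf_forall_isRoot (hp : ∀ i, p i ≠ 0) :
    {x : ι → R | ∀ i, (p i).IsRoot (x i)}.Finite := by
  classical
  rw [setOf_forall_isRoot_eq_piFinset hp]
  exact Finset.finite_toSet _

theorem Polynomial.ncard_setOf_forall_isRoot_le {n : ℕ} (hp : ∀ i, p i ≠ 0)
    (hdeg : ∀ i, (p i).natDegree ≤ n) :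
    {x : ι → R | ∀ i, (p i).IsRoot (x i)}.ncard ≤ n ^ Fintype.card ι := by
  classical
  rw [setOf_forall_isRoot_eq_piFinset hp, Set.ncard_coe_finset, Fintype.card_piFinset]
  exact Finset.prod_le_pow_card _ _ _ fun i _ =>
    (Multiset.toFinset_card_le _).trans ((card_roots' _).trans (hdeg i))

end

theorem zeta_pow_self (d : ℕ) : ζ d ^ d = 1 := by
  rcases eq_or_ne d 0 with rfl | hd
  · exact pow_zero _
  · exact (Complex.isPrimitiveRoot_exp d hd).pow_eq_one

theorem Sm_eq_vandermonde (d : ℕ) : Sm d = vandermonde fun i : Fin d => ζ d ^ (i : ℕ) := by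
  ext i j
  simp [Sm, vandermonde, pow_mul]

theorem isUnit_Sm (d : ℕ) : IsUnit (Sm d) := by
  rw [isUnit_iff_isUnit_det, isUnit_iff_ne_zero, Sm_eq_vandermonde, det_vandermonde_ne_zero_iff]
  intro i j hij
  have hd : d ≠ 0 := by rintro rfl; exact i.elim0
  exact Fin.ext ((Complex.isPrimitiveRoot_exp d hd).pow_inj i.isLt j.isLt hij)

theorem circ_mulVec_col_Sm {d : ℕ} (a : Fin d → ℂ) (j : Fin d) :
    circ a *ᵥ (Sm d)ᵀ j = (a ᵥ* Sm d) j • (Sm d)ᵀ j := by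
  have : NeZero d := ⟨j.pos.ne'⟩
  ext i
  simp only [mulVec, dotProduct, vecMul, Pi.smul_apply, smul_eq_mul, transpose_apply, circ, Sm,
    Finset.sum_mul]
  rw [← Equiv.sum_comp (Equiv.addRight i)]
  refine Finset.sum_congr rfl fun t _ => ?_
  have hmod : ((t + i : Fin d) : ℕ) * j % d = ((t : ℕ) * j + (i : ℕ) * j) % d := by
    rw [Fin.val_add, Nat.mod_mul_mod, add_mul]
  simp only [Equiv.coe_addRight, add_sub_cancel_right]
  rw [pow_eq_pow_mod _ (zeta_pow_self d), hmod, ← pow_eq_pow_mod _ (zeta_pow_self d), pow_add]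
  ring

theorem isRoot_vecMul_Sm_of_circ {d n : ℕ} {a : Fin d → ℂ} {b : Fin n → Fin d → ℂ}
    (h : circ a ^ n + ∑ k : Fin n, circ (b k) * circ a ^ (n - 1 - (k : ℕ)) = 0) (j : Fin d) :
    (X ^ n + ∑ k : Fin n, C ((b k ᵥ* Sm d) j) * X ^ (n - 1 - (k : ℕ))).IsRoot
      ((a ᵥ* Sm d) j) := by
  have hcol : (Sm d)ᵀ j ≠ 0 := fun h0 =>
    pow_ne_zero _ (Complex.exp_ne_zero _) (congrFun h0 j)
  have hsmul := mulVec_pow_add_sum_mul_pow (circ_mulVec_col_Sm a j)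
    fun k => circ_mulVec_col_Sm (b k) j
  rw [h, zero_mulVec, eq_comm, smul_eq_zero] at hsmul
  simpa [eval_finsetSum] using hsmul.resolve_right hcol

theorem stmt11_general (d n : ℕ) (A : Fin n → Matrix (Fin d) (Fin d) ℂ)
    (hA : ∀ k, IsCirc (A k)) :
    {X : Matrix (Fin d) (Fin d) ℂ | IsCirc X ∧
        X ^ n + ∑ k : Fin n, A k * X ^ (n - 1 - (k : ℕ)) = 0}.Finite ∧
    {X : Matrix (Fin d) (Fin d) ℂ | IsCirc X ∧
        X ^ n + ∑ k : Fin n, A k * X ^ (n - 1 - (k : ℕ)) = 0}.ncard ≤ n ^ d := by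
  choose b hb using hA
  set p : Fin d → ℂ[X] := fun j =>
    X ^ n + ∑ k : Fin n, C ((b k ᵥ* Sm d) j) * X ^ (n - 1 - (k : ℕ))
  have hp0 : ∀ j, p j ≠ 0 := fun j => (monic_X_pow_add_sum_C_mul_X_pow_sub _).ne_zero
  have hdeg : ∀ j, (p j).natDegree ≤ n := fun j =>
    (natDegree_X_pow_add_sum_C_mul_X_pow_sub _).le
  have hinj : Function.Injective fun a : Fin d → ℂ => a ᵥ* Sm d :=
    vecMul_injective_iff_isUnit.2 (isUnit_Sm d)
  set Z := {x : Fin d → ℂ | ∀ j, (p j).IsRoot (x j)}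
  set T := (fun a : Fin d → ℂ => a ᵥ* Sm d) ⁻¹' Z
  have hT : T.Finite := (finite_setOf_forall_isRoot hp0).preimage hinj.injOn
  have hsub : {X : Matrix (Fin d) (Fin d) ℂ | IsCirc X ∧
      X ^ n + ∑ k : Fin n, A k * X ^ (n - 1 - (k : ℕ)) = 0} ⊆ circ '' T := by
    rintro X ⟨⟨a, rfl⟩, h⟩
    simp only [hb] at h
    exact ⟨a, isRoot_vecMul_Sm_of_circ h, rfl⟩
  refine ⟨(hT.image circ).subset hsub, ?_⟩
  calc _ ≤ (circ '' T).ncard := Set.ncard_le_ncard hsub (hT.image circ)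
    _ ≤ T.ncard := Set.ncard_image_le hT
    _ ≤ Z.ncard := Set.ncard_le_ncard_of_injOn _ (fun _ ha => ha) hinj.injOn
        (finite_setOf_forall_isRoot hp0)
    _ ≤ n ^ d := (ncard_setOf_forall_isRoot_le hp0 hdeg).trans_eq (by rw [Fintype.card_fin])

theorem stmt11 (d n : ℕ) (hn : 1 ≤ n) (A : Fin n → Matrix (Fin d) (Fin d) ℂ)
    (hA : ∀ k, IsCirc (A k)) :
    {X : Matrix (Fin d) (Fin d) ℂ | IsCirc X ∧
        X ^ n + ∑ k : Fin n, A k * X ^ (n - 1 - (k : ℕ)) = 0}.Finite ∧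
    {X : Matrix (Fin d) (Fin d) ℂ | IsCirc X ∧
        X ^ n + ∑ k : Fin n, A k * X ^ (n - 1 - (k : ℕ)) = 0}.ncard ≤ n ^ d :=
  stmt11_general d n A hA
end

section
/- Let A_k = circ(a_{k,0},...,a_{k,d−1}) for k = 1,...,n be circulant matrices over ℂ, and for i = 0,...,d−1 set b_k^{(i)} = Σ_{j=0}^{d−1} a_{k,j} r^{−ij} with r = e^{2πi/d}. Let n_i be the number of distinct complex roots of x^n + b_1^{(i)} x^{n−1} + ... + b_n^{(i)} = 0. Then the number of circulant solutions X of X^n + A_1 X^{n−1} + ... + A_n = 0 equals the product n_0 · n_1 · ... · n_{d−1}. -/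
open Matrix

/-! Row `i` of the DFT matrix `((ζ d)⁻¹ ^ (i * j))` is a common eigenvector of all circulant
matrices, `circ a` acting on it by the scalar `dft a i`. Hence at `X = circ x` the matrix equation
acts on row `i` as the `i`-th scalar polynomial evaluated at `dft x i`, and since the DFT matrix is
invertible, the equation holds iff every `dft x i` is a root of the `i`-th polynomial. As `circ`
is injective and `dft` is bijective, circulant solutions correspond to tuples of such roots. -/

open Polynomial

namespace Polynomial

variable {R : Type*} [CommRing R] {n : ℕ}

noncomputable def monicOfCoeffs (b : Fin n → R) : R[X] :=
  X ^ n + ∑ k : Fin n, C (b k) * X ^ (n - 1 - (k : ℕ))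

theorem monic_monicOfCoeffs [Nontrivial R] (b : Fin n → R) : (monicOfCoeffs b).Monic := by
  refine monic_X_pow_add ?_
  have hexp (k : Fin n) : n - 1 - (Fin.rev k : ℕ) = k := by
    rw [Fin.val_rev]
    omega
  rw [← Equiv.sum_comp Fin.revPerm]
  simpa only [Fin.revPerm_apply, hexp] using degree_sum_fin_lt fun k => b (Fin.rev k)

theorem eval_monicOfCoeffs (b : Fin n → R) (z : R) :
    (monicOfCoeffs b).eval z = z ^ n + ∑ k : Fin n, b k * z ^ (n - 1 - (k : ℕ)) := by
  simp [monicOfCoeffs, eval_finsetSum]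

end Polynomial

namespace Matrix

variable {ι R : Type*} [Fintype ι] [DecidableEq ι]

theorem pow_mulVec_of_mulVec_eq_smul_s12 [CommSemiring R] {X : Matrix ι ι R} {v : ι → R} {μ : R}
    (h : X *ᵥ v = μ • v) (m : ℕ) : X ^ m *ᵥ v = μ ^ m • v := by
  induction m with
  | zero => simp
  | succ m ih => rw [pow_succ, ← mulVec_mulVec, h, mulVec_smul, ih, smul_smul, pow_succ']

theorem mulVec_eq_eval_monicOfCoeffs_smul [CommRing R] {n : ℕ} {X : Matrix ι ι R}
    {A : Fin n → Matrix ι ι R} {v : ι → R} {μ : R} {β : Fin n → R}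
    (hX : X *ᵥ v = μ • v) (hA : ∀ k, A k *ᵥ v = β k • v) :
    (X ^ n + ∑ k : Fin n, A k * X ^ (n - 1 - (k : ℕ))) *ᵥ v =
      (monicOfCoeffs β).eval μ • v := by
  simp only [eval_monicOfCoeffs, add_mulVec, sum_mulVec, add_smul, Finset.sum_smul,
    ← mulVec_mulVec, pow_mulVec_of_mulVec_eq_smul_s12 hX, mulVec_smul, hA, smul_smul, mul_comm]

theorem eq_zero_of_mulVec_row_eq_zero [CommRing R] {M V : Matrix ι ι R} (hV : IsUnit V)
    (h : ∀ i, M *ᵥ V i = 0) : M = 0 := by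
  have hMV : M * Vᵀ = 0 := by
    ext j i
    simpa [mulVec, dotProduct, mul_apply] using congrFun (h i) j
  exact ((isUnit_transpose V).2 hV).mul_left_eq_zero.mp hMV

end Matrix

section DFT

variable {d : ℕ}

theorem isPrimitiveRoot_zeta_inv (d : ℕ) [NeZero d] : IsPrimitiveRoot (ζ d)⁻¹ d :=
  (Complex.isPrimitiveRoot_exp d (NeZero.ne d)).inv

noncomputable def dftMatrix (d : ℕ) : Matrix (Fin d) (Fin d) ℂ :=
  vandermonde fun i : Fin d => (ζ d)⁻¹ ^ (i : ℕ)

theorem dftMatrix_apply (i j : Fin d) : dftMatrix d i j = (ζ d)⁻¹ ^ ((i : ℕ) * (j : ℕ)) := by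
  rw [dftMatrix, vandermonde_apply, pow_mul]

theorem isUnit_dftMatrix [NeZero d] : IsUnit (dftMatrix d) := by
  rw [isUnit_iff_isUnit_det, isUnit_iff_ne_zero, dftMatrix, det_vandermonde_ne_zero_iff]
  exact fun i j h => Fin.ext ((isPrimitiveRoot_zeta_inv d).pow_inj i.isLt j.isLt h)

noncomputable def dft (a : Fin d → ℂ) : Fin d → ℂ :=
  fun i => ∑ j : Fin d, a j * (ζ d)⁻¹ ^ ((i : ℕ) * (j : ℕ))

theorem dft_eq_mulVec (a : Fin d → ℂ) : dft a = dftMatrix d *ᵥ a := by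
  ext i
  simp [dft, mulVec, dotProduct, dftMatrix_apply, mul_comm]

theorem dft_bijective [NeZero d] : Function.Bijective (dft (d := d)) := by
  rw [show dft (d := d) = (dftMatrix d *ᵥ ·) from funext dft_eq_mulVec]
  exact ⟨mulVec_injective_iff_isUnit.2 isUnit_dftMatrix,
    mulVec_surjective_iff_isUnit.2 isUnit_dftMatrix⟩

theorem circ_injective [NeZero d] : Function.Injective (circ (d := d)) := fun a b h =>
  funext fun j => by simpa [circ] using congrFun (congrFun h 0) j

theorem circ_mulVec_dftMatrix [NeZero d] (a : Fin d → ℂ) (i : Fin d) :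
    circ a *ᵥ dftMatrix d i = dft a i • dftMatrix d i := by
  have hw : ((ζ d)⁻¹ ^ (i : ℕ)) ^ d = 1 := by
    rw [← pow_mul, mul_comm, pow_mul, (isPrimitiveRoot_zeta_inv d).pow_eq_one, one_pow]
  have hshift (m k : Fin d) : (ζ d)⁻¹ ^ ((i : ℕ) * ((m + k : Fin d) : ℕ))
      = (ζ d)⁻¹ ^ ((i : ℕ) * (m : ℕ)) * (ζ d)⁻¹ ^ ((i : ℕ) * (k : ℕ)) := by
    rw [pow_mul, Fin.val_add, ← pow_eq_pow_mod _ hw, pow_add, ← pow_mul, ← pow_mul]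
  ext k
  simp only [mulVec, dotProduct, circ, dftMatrix_apply, Pi.smul_apply, smul_eq_mul, dft,
    Finset.sum_mul]
  rw [← Equiv.sum_comp (Equiv.addRight k)]
  simp only [Equiv.coe_addRight, add_sub_cancel_right, hshift, mul_assoc]

theorem circ_equation_iff [NeZero d] {n : ℕ} (a : Fin n → Fin d → ℂ) (x : Fin d → ℂ) :
    circ x ^ n + ∑ k : Fin n, circ (a k) * circ x ^ (n - 1 - (k : ℕ)) = 0 ↔
      ∀ i, (monicOfCoeffs fun k => dft (a k) i).IsRoot (dft x i) := by
  have hev (i : Fin d) := mulVec_eq_eval_monicOfCoeffs_smul (circ_mulVec_dftMatrix x i)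
    fun k => circ_mulVec_dftMatrix (a k) i
  have hrow (i : Fin d) : dftMatrix d i ≠ 0 := fun h => by
    simpa [dftMatrix_apply] using congrFun h 0
  constructor
  · intro h i
    simpa [h, hrow i, eq_comm] using hev i
  · intro h
    exact eq_zero_of_mulVec_row_eq_zero isUnit_dftMatrix fun i => by
      rw [hev, (h i).eq_zero, zero_smul]

end DFT

theorem stmt12_general (d n : ℕ) [NeZero d] (a : Fin n → Fin d → ℂ) :
    {X : Matrix (Fin d) (Fin d) ℂ | IsCirc X ∧
        X ^ n + ∑ k : Fin n, circ (a k) * X ^ (n - 1 - (k : ℕ)) = 0}.ncard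
      = ∏ i : Fin d,
          ((Polynomial.X ^ n + ∑ k : Fin n,
              Polynomial.C (∑ j : Fin d, a k j * ((ζ d)⁻¹) ^ ((i : ℕ) * (j : ℕ))) *
                Polynomial.X ^ (n - 1 - (k : ℕ)) : Polynomial ℂ)).roots.toFinset.card := by
  have hsol : {X : Matrix (Fin d) (Fin d) ℂ | IsCirc X ∧
        X ^ n + ∑ k : Fin n, circ (a k) * X ^ (n - 1 - (k : ℕ)) = 0}
      = circ '' (dft ⁻¹'
          Fintype.piFinset fun i => (monicOfCoeffs fun k => dft (a k) i).roots.toFinset) := by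
    ext X
    simp only [Set.mem_ofPred_eq, Set.mem_image, Set.mem_preimage, Finset.mem_coe,
      Fintype.mem_piFinset, Multiset.mem_toFinset, mem_roots (monic_monicOfCoeffs _).ne_zero]
    constructor
    · rintro ⟨⟨x, rfl⟩, hx⟩
      exact ⟨x, (circ_equation_iff a x).1 hx, rfl⟩
    · rintro ⟨x, hx, rfl⟩
      exact ⟨⟨x, rfl⟩, (circ_equation_iff a x).2 hx⟩
  rw [hsol, Set.ncard_image_of_injective _ circ_injective,
    Set.ncard_preimage_of_injective_subset_range dft_bijective.1
      (by simp [dft_bijective.2.range_eq]),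
    Set.ncard_coe_finset, Fintype.card_piFinset]
  rfl

theorem stmt12 (d n : ℕ) [NeZero d] (hn : 1 ≤ n) (a : Fin n → Fin d → ℂ) :
    {X : Matrix (Fin d) (Fin d) ℂ | IsCirc X ∧
        X ^ n + ∑ k : Fin n, circ (a k) * X ^ (n - 1 - (k : ℕ)) = 0}.ncard
      = ∏ i : Fin d,
          ((Polynomial.X ^ n + ∑ k : Fin n,
              Polynomial.C (∑ j : Fin d, a k j * ((ζ d)⁻¹) ^ ((i : ℕ) * (j : ℕ))) *
                Polynomial.X ^ (n - 1 - (k : ℕ)) : Polynomial ℂ)).roots.toFinset.card :=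
  stmt12_general d n a
end
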